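/- arXiv:2202.05114 — 2 statements merged into one kernel-verified Lean document; each statement's English description precedes it below -/
import Mathlib

section
/- 1-2 network optimal inflow identity: under flux conservation λ₁(t₁) z^{(1)}(1,t₁) = λ₂(t₁) z^{(2)}(0,t₁) + λ₃(t₁) z^{(3)}(0,t₁) at the junction, damping relations G̃ᵢ(z at start) = G̃ᵢ(z at end) + ∫ μᵢ along characteristics on each arc, and prescribed outflows λ₂(t₂) z^{(2)}(1,t₂) = D₂ and λ₃(t₃) z^{(3)}(1,t₃) = D₃, the inflow satisfies u(t_in) = λ₁(t_in) · G̃₁⁻¹( G̃₁( (λ₂(t₁)/λ₁(t₁)) G̃₂⁻¹( G̃₂(D₂/λ₂(t₂)) + ∫_{t₁}^{t₂} μ₂ ) + (λ₃(t₁)/λ₁(t₁)) G̃₃⁻¹( G̃₃(D₃/λ₃(t₃)) + ∫_{t₁}^{t₃} μ₃ ) ) + ∫_{t_in}^{t₁} μ₁ ). -/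
open intervalIntegral

/-- 1-2 network optimal inflow identity. -/
theorem stmt_12 (lam₁ lam₂ lam₃ : ℝ → ℝ)
    (hlam₁ : ∀ t, 0 < lam₁ t) (hlam₂ : ∀ t, 0 < lam₂ t) (hlam₃ : ∀ t, 0 < lam₃ t)
    (G₁ G₂ G₃ : ℝ → ℝ)
    (hG₁mono : StrictMono G₁) (hG₂mono : StrictMono G₂) (hG₃mono : StrictMono G₃)
    (G₁inv G₂inv G₃inv : ℝ → ℝ)
    (hG₁inv : ∀ x, G₁inv (G₁ x) = x) (hG₂inv : ∀ x, G₂inv (G₂ x) = x)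
    (hG₃inv : ∀ x, G₃inv (G₃ x) = x)
    (μ₁ μ₂ μ₃ : ℝ → ℝ) (hμ₁ : ∀ t, 0 ≤ μ₁ t) (hμ₂ : ∀ t, 0 ≤ μ₂ t) (hμ₃ : ∀ t, 0 ≤ μ₃ t)
    (t_in t₁ t₂ t₃ : ℝ) (h₀₁ : t_in < t₁) (h₁₂ : t₁ < t₂) (h₁₃ : t₁ < t₃)
    (z₁ z₂ z₃ : ℝ → ℝ → ℝ)
    (hdamp₁ : G₁ (z₁ 0 t_in) = G₁ (z₁ 1 t₁) + ∫ s in t_in..t₁, μ₁ s)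
    (hdamp₂ : G₂ (z₂ 0 t₁) = G₂ (z₂ 1 t₂) + ∫ s in t₁..t₂, μ₂ s)
    (hdamp₃ : G₃ (z₃ 0 t₁) = G₃ (z₃ 1 t₃) + ∫ s in t₁..t₃, μ₃ s)
    (hflux : lam₁ t₁ * z₁ 1 t₁ = lam₂ t₁ * z₂ 0 t₁ + lam₃ t₁ * z₃ 0 t₁)
    (D₂ D₃ : ℝ) (hdem₂ : lam₂ t₂ * z₂ 1 t₂ = D₂) (hdem₃ : lam₃ t₃ * z₃ 1 t₃ = D₃)
    (u : ℝ) (hu : u = lam₁ t_in * z₁ 0 t_in) :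
    u = lam₁ t_in * G₁inv (G₁ (
        (lam₂ t₁ / lam₁ t₁) * G₂inv (G₂ (D₂ / lam₂ t₂) + ∫ s in t₁..t₂, μ₂ s) +
        (lam₃ t₁ / lam₁ t₁) * G₃inv (G₃ (D₃ / lam₃ t₃) + ∫ s in t₁..t₃, μ₃ s))
      + ∫ s in t_in..t₁, μ₁ s) := by
  have h2 : D₂ / lam₂ t₂ = z₂ 1 t₂ := by
    field_simp [← hdem₂, mul_comm, (hlam₂ t₂).ne']
    exact hdem₂.symm
  have h3 : D₃ / lam₃ t₃ = z₃ 1 t₃ := by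
    field_simp [← hdem₃, mul_comm, (hlam₃ t₃).ne']
    exact hdem₃.symm
  rw [h2, h3, ← hdamp₂, ← hdamp₃, hG₂inv, hG₃inv]
  have harg : (lam₂ t₁ / lam₁ t₁) * z₂ 0 t₁ + (lam₃ t₁ / lam₁ t₁) * z₃ 0 t₁ = z₁ 1 t₁ := by
    rw [div_mul_eq_mul_div, div_mul_eq_mul_div, ← add_div, ← hflux,
      mul_div_cancel_left₀ _ (hlam₁ t₁).ne']
  rw [harg, ← hdamp₁, hG₁inv, hu]
end

section
/- Undamped inflow is a lower bound: with a, b ≥ 0 and G̃ᵢ strictly increasing, the inflow Φ(D) defined with damping integrals a, b satisfies Φ(D) ≥ Φ₀(D), where Φ₀(D) = λ₁(t_in) (λ₂(t₁)/λ₁(t₁)) (D/λ₂(t₂)) is the value obtained with a = b = 0 (no damping). -/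
theorem stmt_19 (l1in l1t1 l2t1 l2t2 : ℝ)
    (hl1in : 0 < l1in) (hl1t1 : 0 < l1t1) (hl2t1 : 0 < l2t1) (hl2t2 : 0 < l2t2)
    (G₁ G₂ : ℝ → ℝ) (hG₁ : StrictMono G₁) (hG₂ : StrictMono G₂)
    (G₁inv G₂inv : ℝ → ℝ)
    (hG₁inv₁ : ∀ x, G₁inv (G₁ x) = x) (hG₁inv₂ : ∀ y, G₁ (G₁inv y) = y)
    (hG₂inv₁ : ∀ x, G₂inv (G₂ x) = x) (hG₂inv₂ : ∀ y, G₂ (G₂inv y) = y)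
    (a b : ℝ) (ha : 0 ≤ a) (hb : 0 ≤ b)
    (Φ Φ₀ : ℝ → ℝ)
    (hΦ : ∀ D, Φ D = l1in * G₁inv (G₁ ((l2t1 / l1t1) * G₂inv (G₂ (D / l2t2) + a)) + b))
    (hΦ₀ : ∀ D, Φ₀ D = l1in * ((l2t1 / l1t1) * (D / l2t2))) :
    ∀ D, Φ₀ D ≤ Φ D := by
  have key₁ : ∀ x, x ≤ G₁inv (G₁ x + b) := fun x => by
    have : G₁ x ≤ G₁ (G₁inv (G₁ x + b)) := by rw [hG₁inv₂]; linarith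
    exact hG₁.le_iff_le.mp this
  have key₂ : ∀ x, x ≤ G₂inv (G₂ x + a) := fun x => by
    have : G₂ x ≤ G₂ (G₂inv (G₂ x + a)) := by rw [hG₂inv₂]; linarith
    exact hG₂.le_iff_le.mp this
  intro D
  rw [hΦ, hΦ₀]
  have hpos : 0 ≤ l2t1 / l1t1 := le_of_lt (div_pos hl2t1 hl1t1)
  have h2 : (l2t1 / l1t1) * (D / l2t2) ≤ (l2t1 / l1t1) * G₂inv (G₂ (D / l2t2) + a) :=
    mul_le_mul_of_nonneg_left (key₂ _) hpos
  have h3 : (l2t1 / l1t1) * (D / l2t2) ≤ G₁inv (G₁ ((l2t1 / l1t1) * G₂inv (G₂ (D / l2t2) + a)) + b) :=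
    h2.trans (key₁ _)
  exact mul_le_mul_of_nonneg_left h3 hl1in.le
end
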